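/- arXiv:1312.4306 — 2 statements merged into one kernel-verified Lean document; each statement's English description precedes it below -/
import Mathlib

section
/- Let (A_k)_{k∈ℤ} be a CPD with n ≥ 4 vertices. Then for every k with 2 ≤ k ≤ n-2, the segments [A_0, A_k] and [A_{n-1}, A_1] cross, i.e., their relative interiors intersect. -/
noncomputable section

/-- Determinant of two vectors of the plane in the canonical basis. -/
def det2 (v w : ℝ × ℝ) : ℝ := v.1 * w.2 - v.2 * w.1

/-- Convex polygonal direct (CPD) with `n` vertices: an `n`-periodic sequence of
points of the plane such that every vertex `A q`, `q ∈ [1, n-1] \ {p, p+1}`, is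
strictly on the positive side of the oriented edge `(A p, A (p+1))`. -/
def IsCPD (n : ℕ) (A : ℤ → ℝ × ℝ) : Prop :=
  3 ≤ n ∧ (∀ k : ℤ, A (k + n) = A k) ∧
  ∀ p q : ℤ, 0 ≤ p → p ≤ (n : ℤ) - 1 → 1 ≤ q → q ≤ (n : ℤ) - 1 →
    q ≠ p → q ≠ p + 1 → 0 < det2 (A (p + 1) - A p) (A q - A p)

/-- First closed quadrant. -/
def Q1 (v : ℝ × ℝ) : Prop := 0 ≤ v.1 ∧ 0 ≤ v.2
/-- Second closed quadrant. -/
def Q2 (v : ℝ × ℝ) : Prop := v.1 ≤ 0 ∧ 0 ≤ v.2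
/-- Third closed quadrant. -/
def Q3 (v : ℝ × ℝ) : Prop := v.1 ≤ 0 ∧ v.2 ≤ 0
/-- Fourth closed quadrant. -/
def Q4 (v : ℝ × ℝ) : Prop := 0 ≤ v.1 ∧ v.2 ≤ 0

/-- Two vectors lie in the same closed quadrant. -/
def SameQuadrant (v w : ℝ × ℝ) : Prop :=
  (Q1 v ∧ Q1 w) ∨ (Q2 v ∧ Q2 w) ∨ (Q3 v ∧ Q3 w) ∨ (Q4 v ∧ Q4 w)

/-- The unit square `[0,1]²`. -/
def unitSquare : Set (ℝ × ℝ) := Set.Icc ((0, 0) : ℝ × ℝ) (1, 1)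

/-- Membership in the family `D_{m,n}` of Farey lines: lines meeting the unit
square with an integer equation `u x + v y = w`, `|u| ≤ m`, `|v| ≤ n`,
`(u, v) ≠ (0, 0)`. -/
def IsFareyLine (m n : ℕ) (L : Set (ℝ × ℝ)) : Prop :=
  (L ∩ unitSquare).Nonempty ∧
  ∃ u v w : ℤ, |u| ≤ (m : ℤ) ∧ |v| ≤ (n : ℤ) ∧ (u, v) ≠ (0, 0) ∧
    L = {p : ℝ × ℝ | (u : ℝ) * p.1 + (v : ℝ) * p.2 = (w : ℝ)}

/-- The Farey complex `CF(m,n)`: the complement in the unit square of the union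
of the lines of `D_{m,n}`. -/
def FareyComplex (m n : ℕ) : Set (ℝ × ℝ) :=
  {p ∈ unitSquare | ∀ L, IsFareyLine m n L → p ∉ L}

/-- The closed polygonal line associated with a `p`-periodic sequence of points. -/
def Polyline (p : ℕ) (A : ℤ → ℝ × ℝ) : Set (ℝ × ℝ) :=
  ⋃ k ∈ Finset.range p, segment ℝ (A k) (A (k + 1))


/-!
The vertices `A 0, A 1, A k, A (n-1)` form a counterclockwise convex quadrilateral: the three
triangles through the edges `A 0 A 1` and `A (n-1) A 0` are positively oriented by definition of a
CPD, and `A 1, A k, A (n-1)` is too, because along the chain `A 1, …, A (n-1)` every increasing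
triple turns left (induction on the last index, via a Plücker relation). In a counterclockwise
convex quadrilateral `a b c d` the identity
`orient b c d • a + orient d a b • c = orient c d a • b + orient a b c • d`, divided by
`orient a b c + orient c d a = orient d a b + orient b c d`, exhibits the crossing point of the
diagonals as a proper convex combination of both pairs of opposite vertices.
-/

def orient (a b c : ℝ × ℝ) : ℝ := det2 (b - a) (c - a)

lemma orient_rotate (a b c : ℝ × ℝ) : orient b c a = orient a b c := by
  simp only [orient, det2, Prod.fst_sub, Prod.snd_sub]; ring

-- Grassmann–Plücker relation for the vectors from `a` to `b`, `c`, `d`, `e`.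
lemma orient_mul_orient (a b c d e : ℝ × ℝ) :
    orient a c e * orient a b d = orient a b e * orient a c d + orient a b c * orient a d e := by
  simp only [orient, det2, Prod.fst_sub, Prod.snd_sub]; ring

lemma orient_add_orient (a b c d : ℝ × ℝ) :
    orient a b c + orient c d a = orient d a b + orient b c d := by
  simp only [orient, det2, Prod.fst_sub, Prod.snd_sub]; ring

lemma orient_smul_add_orient_smul (a b c d : ℝ × ℝ) :
    orient b c d • a + orient d a b • c = orient c d a • b + orient a b c • d := by
  ext <;> simp only [orient, det2, Prod.fst_sub, Prod.snd_sub, Prod.smul_fst, Prod.smul_snd,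
    Prod.fst_add, Prod.snd_add, smul_eq_mul] <;> ring

theorem diagonals_cross_of_orient_pos {a b c d : ℝ × ℝ} (habc : 0 < orient a b c)
    (hbcd : 0 < orient b c d) (hcda : 0 < orient c d a) (hdab : 0 < orient d a b) :
    ∃ t s : ℝ, 0 < t ∧ t < 1 ∧ 0 < s ∧ s < 1 ∧ (1 - t) • a + t • c = (1 - s) • d + s • b := by
  set S := orient a b c + orient c d a
  have hS_pos : 0 < S := by positivity
  have h1t : 1 - orient d a b / S = orient b c d / S := by
    field_simp; linarith [orient_add_orient a b c d]
  have h1s : 1 - orient c d a / S = orient a b c / S := by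
    field_simp; linarith
  refine ⟨orient d a b / S, orient c d a / S, by positivity, ?_, by positivity, ?_, ?_⟩
  · rw [div_lt_one hS_pos]; linarith [orient_add_orient a b c d]
  · rw [div_lt_one hS_pos]; linarith
  · rw [h1t, h1s]
    simp only [div_eq_inv_mul, mul_smul, ← smul_add]
    rw [orient_smul_add_orient_smul, add_comm]

namespace IsCPD

variable {n : ℕ} {A : ℤ → ℝ × ℝ}

lemma apply_natCast (hA : IsCPD n A) : A n = A 0 := by
  simpa using hA.2.1 0

lemma orient_edge_pos (hA : IsCPD n A) {p q : ℤ} (hp0 : 0 ≤ p) (hpn : p ≤ n - 1)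
    (hq1 : 1 ≤ q) (hqn : q ≤ n - 1) (hqp : q ≠ p) (hqp' : q ≠ p + 1) :
    0 < orient (A p) (A (p + 1)) (A q) :=
  hA.2.2 p q hp0 hpn hq1 hqn hqp hqp'

lemma orient_pos (hA : IsCPD n A) {i j l : ℤ} (hi : 1 ≤ i) (hij : i < j) (hjl : j < l)
    (hl : l ≤ n - 1) : 0 < orient (A i) (A j) (A l) := by
  induction l, hjl using Int.leInduction with
  | base =>
    rw [← orient_rotate]
    exact hA.orient_edge_pos (by omega) (by omega) hi (by omega) (by omega) (by omega)
  | succ l hjl ih =>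
    have hedge : ∀ q, i + 1 < q → q ≤ n - 1 → 0 < orient (A i) (A (i + 1)) (A q) := fun q h1 h2 =>
      hA.orient_edge_pos (by omega) (by omega) (by omega) h2 (by omega) (by omega)
    obtain rfl | hj := eq_or_ne j (i + 1)
    · exact hedge _ (by omega) hl
    have hlast : 0 < orient (A i) (A l) (A (l + 1)) := by
      rw [← orient_rotate]
      exact hA.orient_edge_pos (p := l) (by omega) (by omega) hi (by omega) (by omega) (by omega)
    have hprod : 0 < orient (A i) (A j) (A (l + 1)) * orient (A i) (A (i + 1)) (A l) := by
      rw [orient_mul_orient]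
      exact add_pos (mul_pos (hedge (l + 1) (by omega) hl) (ih (by omega)))
        (mul_pos (hedge j (by omega) (by omega)) hlast)
    exact pos_of_mul_pos_left hprod (hedge l (by omega) (by omega)).le

end IsCPD

theorem diagonals_cross_general (n : ℕ) (A : ℤ → ℝ × ℝ)
    (hA : IsCPD n A) (k : ℤ) (hk2 : 2 ≤ k) (hkn : k ≤ (n : ℤ) - 2) :
    ∃ t s : ℝ, 0 < t ∧ t < 1 ∧ 0 < s ∧ s < 1 ∧
      (1 - t) • A 0 + t • A k = (1 - s) • A ((n : ℤ) - 1) + s • A 1 := by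
  have hlast : A ((n : ℤ) - 1 + 1) = A 0 := by rw [sub_add_cancel, hA.apply_natCast]
  have h01k : 0 < orient (A 0) (A 1) (A k) :=
    hA.orient_edge_pos (p := 0) le_rfl (by omega) (by omega) (by omega) (by omega) (by omega)
  have h1kn : 0 < orient (A 1) (A k) (A ((n : ℤ) - 1)) :=
    hA.orient_pos le_rfl (by omega) (by omega) le_rfl
  have hkn0 : 0 < orient (A k) (A ((n : ℤ) - 1)) (A 0) := by
    rw [← orient_rotate (A k), ← hlast]
    exact hA.orient_edge_pos (by omega) le_rfl (by omega) (by omega) (by omega) (by omega)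
  have hn01 : 0 < orient (A ((n : ℤ) - 1)) (A 0) (A 1) := by
    rw [← hlast]
    exact hA.orient_edge_pos (by omega) le_rfl le_rfl (by omega) (by omega) (by omega)
  exact diagonals_cross_of_orient_pos h01k h1kn hkn0 hn01

/-- Lemma of the diagonals: for `2 ≤ k ≤ n - 2`, the segments `[A 0, A k]` and
`[A (n-1), A 1]` cross, i.e. meet at a point interior to both. -/
theorem diagonals_cross (n : ℕ) (hn : 4 ≤ n) (A : ℤ → ℝ × ℝ)
    (hA : IsCPD n A) (k : ℤ) (hk2 : 2 ≤ k) (hkn : k ≤ (n : ℤ) - 2) :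
    ∃ t s : ℝ, 0 < t ∧ t < 1 ∧ 0 < s ∧ s < 1 ∧
      (1 - t) • A 0 + t • A k = (1 - s) • A ((n : ℤ) - 1) + s • A 1 :=
  diagonals_cross_general n A hA k hk2 hkn
end
end

section
/- Let (A_k)_{k∈ℤ} be a CPD with p vertices. Then the union of the segments [A_k, A_{k+1}], 0 ≤ k ≤ p-1, is the frontier of a bounded convex set with nonempty interior, namely the convex hull of {A_0, …, A_{p-1}}, which is an intersection of the p closed half-planes {M : det(A_{k+1} - A_k, M - A_k) ≥ 0}. -/
noncomputable section

/-! The half-plane of each edge contains every vertex, hence the convex hull. Conversely, a point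
outside the hull is separated from it by a linear form `f`; at a vertex where `f` is maximal, the
half-planes of the two adjacent edges confine the point to the angle of the polygon at that
vertex, on which `f` is at most its value at the vertex. The interior of the hull is the
intersection of the open half-planes, so a frontier point lies on the line of some edge, and the
half-planes of the two neighbouring edges confine it to the edge itself. -/

open Set Function Filter Topology

theorem Function.Periodic.image_Ico {α β : Type*} [AddCommGroup α] [LinearOrder α]
    [IsOrderedAddMonoid α] [Archimedean α] {f : α → β} {c : α} (h : Periodic f c) (hc : 0 < c)
    (a : α) : f '' Ico a (a + c) = range f :=
  (image_subset_range _ _).antisymm <| range_subset_iff.2 fun x =>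
    let ⟨y, hy, hyx⟩ := h.exists_mem_Ico hc x a
    ⟨y, hy, hyx.symm⟩

theorem Function.Periodic.exists_lt_eq {α : Type*} {f : ℤ → α} {p : ℕ} (h : Periodic f p)
    (hp : 0 < p) (k : ℤ) : ∃ n < p, f n = f k := by
  obtain ⟨y, ⟨hy0, hyp⟩, hky⟩ := h.exists_mem_Ico (Int.natCast_pos.2 hp) k 0
  exact ⟨y.toNat, by omega, by rw [Int.toNat_of_nonneg hy0, hky]⟩

theorem Function.Periodic.biInter_range_eq {β : Type*} {g : ℤ → Set β} {p : ℕ}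
    (h : Periodic g p) (hp : 0 < p) : ⋂ n ∈ Finset.range p, g n = ⋂ k : ℤ, g k := by
  refine subset_antisymm (subset_iInter fun k => ?_) (subset_iInter₂ fun n _ => iInter_subset _ _)
  obtain ⟨n, hn, hnk⟩ := h.exists_lt_eq hp k
  exact hnk ▸ biInter_subset_of_mem (Finset.mem_range.2 hn)

theorem Function.Periodic.biUnion_range_eq {β : Type*} {g : ℤ → Set β} {p : ℕ}
    (h : Periodic g p) (hp : 0 < p) : ⋃ n ∈ Finset.range p, g n = ⋃ k : ℤ, g k := by
  refine subset_antisymm (iUnion₂_subset fun n _ => subset_iUnion _ _) (iUnion_subset fun k => ?_)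
  obtain ⟨n, hn, hnk⟩ := h.exists_lt_eq hp k
  exact fun x hx => mem_iUnion₂.2 ⟨n, Finset.mem_range.2 hn, hnk ▸ hx⟩

lemma det2_self (u : ℝ × ℝ) : det2 u u = 0 := by
  simp only [det2]; ring

lemma det2_zero_right (u : ℝ × ℝ) : det2 u 0 = 0 := by
  simp [det2]

lemma det2_rotate (a b c : ℝ × ℝ) : det2 (b - a) (c - a) = det2 (c - b) (a - b) := by
  simp only [det2, Prod.fst_sub, Prod.snd_sub]; ring

lemma det2_sub_sub_right (a b c : ℝ × ℝ) : det2 (b - a) (c - b) = det2 (b - a) (c - a) := by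
  simp only [det2, Prod.fst_sub, Prod.snd_sub]; ring

lemma det2_plucker (c u v w : ℝ × ℝ) :
    det2 c v * det2 u w = det2 c u * det2 v w + det2 c w * det2 u v := by
  simp only [det2]; ring

/-- Angular order is transitive inside the half-plane `{x | 0 < det2 c x}`. -/
lemma det2_pos_trans {c u v w : ℝ × ℝ} (hu : 0 < det2 c u) (hv : 0 < det2 c v)
    (hw : 0 ≤ det2 c w) (huv : 0 < det2 u v) (hvw : 0 < det2 v w) : 0 < det2 u w := by
  have h := det2_plucker c u v w
  exact pos_of_mul_pos_right (h ▸ add_pos_of_pos_of_nonneg (mul_pos hu hvw)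
    (mul_nonneg hw huv.le)) hv.le

lemma det2_cramer {u v : ℝ × ℝ} (w : ℝ × ℝ) (h : det2 u v ≠ 0) :
    w = (det2 w v / det2 u v) • u + (det2 u w / det2 u v) • v := by
  obtain ⟨u1, u2⟩ := u; obtain ⟨v1, v2⟩ := v; obtain ⟨w1, w2⟩ := w
  simp only [det2] at *
  ext <;> simp only [Prod.smul_mk, Prod.mk_add_mk, smul_eq_mul] <;>
    rw [div_mul_eq_mul_div, div_mul_eq_mul_div, ← add_div, eq_div_iff h] <;> ring

lemma exists_nonneg_smul_add_of_det2 {u v w : ℝ × ℝ} (huv : 0 < det2 u v)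
    (hu : 0 ≤ det2 u w) (hv : 0 ≤ det2 w v) : ∃ a b : ℝ, 0 ≤ a ∧ 0 ≤ b ∧ w = a • u + b • v :=
  ⟨_, _, div_nonneg hv huv.le, div_nonneg hu huv.le, det2_cramer w huv.ne'⟩

lemma eq_smul_of_det2_eq_zero {u n w : ℝ × ℝ} (h : det2 u w = 0) (hn : det2 u n ≠ 0) :
    w = (det2 w n / det2 u n) • u := by
  simpa [h] using det2_cramer w hn

def halfPlane (a b : ℝ × ℝ) : Set (ℝ × ℝ) := {M | 0 ≤ det2 (b - a) (M - a)}

def openHalfPlane (a b : ℝ × ℝ) : Set (ℝ × ℝ) := {M | 0 < det2 (b - a) (M - a)}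

lemma mem_halfPlane {a b M : ℝ × ℝ} : M ∈ halfPlane a b ↔ 0 ≤ det2 (b - a) (M - a) := Iff.rfl

lemma mem_openHalfPlane {a b M : ℝ × ℝ} : M ∈ openHalfPlane a b ↔ 0 < det2 (b - a) (M - a) :=
  Iff.rfl

lemma convex_halfPlane (a b : ℝ × ℝ) : Convex ℝ (halfPlane a b) := by
  intro x hx y hy s t hs ht hst
  obtain rfl : t = 1 - s := by linarith
  have h : det2 (b - a) (s • x + (1 - s) • y - a) =
      s * det2 (b - a) (x - a) + (1 - s) * det2 (b - a) (y - a) := by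
    simp only [det2, Prod.fst_add, Prod.snd_add, Prod.fst_sub, Prod.snd_sub, Prod.smul_fst,
      Prod.smul_snd, smul_eq_mul]
    ring
  rw [mem_halfPlane, h]
  exact add_nonneg (mul_nonneg hs hx) (mul_nonneg ht hy)

lemma isOpen_openHalfPlane (a b : ℝ × ℝ) : IsOpen (openHalfPlane a b) :=
  isOpen_lt continuous_const (by simp only [det2, Prod.fst_sub, Prod.snd_sub]; fun_prop)

lemma openHalfPlane_subset_halfPlane (a b : ℝ × ℝ) : openHalfPlane a b ⊆ halfPlane a b :=
  fun _ h => (mem_openHalfPlane.1 h).le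

lemma det2_eq_zero_of_mem_segment {a b M : ℝ × ℝ} (h : M ∈ segment ℝ a b) :
    det2 (b - a) (M - a) = 0 := by
  rw [segment_eq_image'] at h
  obtain ⟨t, -, rfl⟩ := h
  simp only [add_sub_cancel_left, det2, Prod.smul_fst, Prod.smul_snd, smul_eq_mul]
  ring

lemma mem_segment_of_det2_eq_zero {a b c d M : ℝ × ℝ} (hb : 0 < det2 (c - b) (a - b))
    (hc : 0 < det2 (d - c) (b - c)) (hM : det2 (c - b) (M - b) = 0) (ha : M ∈ halfPlane a b)
    (hd : M ∈ halfPlane c d) : M ∈ segment ℝ b c := by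
  set t := det2 (M - b) (a - b) / det2 (c - b) (a - b)
  have ht : M = b + t • (c - b) := by
    rw [← eq_smul_of_det2_eq_zero hM hb.ne']; abel
  rw [ht] at ha hd
  simp only [mem_halfPlane, det2, Prod.fst_add, Prod.snd_add, Prod.fst_sub,
    Prod.snd_sub, Prod.smul_fst, Prod.smul_snd, smul_eq_mul] at ha hd hb hc
  rw [segment_eq_image', ht]
  exact ⟨t, ⟨by nlinarith, by nlinarith⟩, rfl⟩

lemma interior_subset_openHalfPlane {C : Set (ℝ × ℝ)} {a b n : ℝ × ℝ} (hC : C ⊆ halfPlane a b)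
    (hn : 0 < det2 (b - a) n) : interior C ⊆ openHalfPlane a b := by
  intro M hM
  have hT : Tendsto (fun t : ℝ => M - t • n) (𝓝[>] 0) (𝓝 M) := by
    have h : Continuous (fun t : ℝ => M - t • n) := by fun_prop
    simpa using (h.tendsto 0).mono_left nhdsWithin_le_nhds
  obtain ⟨t, htC, ht⟩ :=
    ((hT.eventually (mem_interior_iff_mem_nhds.1 hM)).and self_mem_nhdsWithin).exists
  have h : det2 (b - a) (M - t • n - a) = det2 (b - a) (M - a) - t * det2 (b - a) n := by
    simp only [det2, Prod.fst_sub, Prod.snd_sub, Prod.smul_fst, Prod.smul_snd, smul_eq_mul]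
    ring
  have := mem_halfPlane.1 (hC htC)
  rw [h] at this
  rw [mem_openHalfPlane]
  nlinarith [show (0 : ℝ) < t from ht]

namespace IsCPD

variable {p : ℕ} {A : ℤ → ℝ × ℝ}

lemma pos (hA : IsCPD p A) : 0 < p := by
  have := hA.1; omega

lemma periodic (hA : IsCPD p A) : Periodic A p := hA.2.1

lemma periodic_edge {γ : Type*} (hA : IsCPD p A) (F : ℝ × ℝ → ℝ × ℝ → γ) :
    Periodic (fun k : ℤ => F (A k) (A (k + 1))) p := fun k => by
  simp only [add_right_comm k (p : ℤ) 1, hA.periodic _]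

lemma image_Ico (hA : IsCPD p A) : A '' Ico 0 p = range A := by
  simpa using hA.periodic.image_Ico (Int.natCast_pos.2 hA.pos) 0

lemma finite_range (hA : IsCPD p A) : (range A).Finite :=
  hA.image_Ico ▸ (finite_Ico 0 (p : ℤ)).image A

lemma isCompact_convexHull (hA : IsCPD p A) : IsCompact (convexHull ℝ (range A)) :=
  hA.finite_range.isCompact_convexHull ℝ

/-- The definition of a CPD does not test `A 0` against the edges `[A k, A (k + 1)]`,
`1 ≤ k ≤ p - 2`; this is recovered by induction on `k`, comparing directions seen from `A k`. -/
lemma det2_pos_zero (hA : IsCPD p A) {k : ℤ} (hk1 : 1 ≤ k) (hk2 : k ≤ p - 2) :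
    0 < det2 (A (k + 1) - A k) (A 0 - A k) := by
  obtain ⟨hp, hper, hH⟩ := hA
  have hAp : A p = A 0 := by simpa using hper 0
  have last : 0 < det2 (A (p - 2 + 1) - A (p - 2)) (A 0 - A (p - 2)) := by
    have := hH (p - 1) (p - 2) (by omega) le_rfl (by omega) (by omega) (by omega) (by omega)
    rwa [sub_add_cancel, hAp, det2_rotate, det2_rotate, show (p : ℤ) - 1 = p - 2 + 1 by ring]
      at this
  have step : ∀ i : ℤ, 0 ≤ i → i + 1 ≤ p - 3 → 0 ≤ det2 (A (i + 1) - A i) (A 0 - A i) →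
      0 < det2 (A (i + 1 + 1) - A (i + 1)) (A 0 - A (i + 1)) := by
    intro i hi0 hi h
    refine det2_pos_trans (c := A (i + 1) - A i) (v := A (p - 1) - A (i + 1)) ?_ ?_ ?_ ?_ ?_
    · rw [det2_sub_sub_right]
      exact hH i (i + 1 + 1) hi0 (by omega) (by omega) (by omega) (by omega) (by omega)
    · rw [det2_sub_sub_right]
      exact hH i (p - 1) hi0 (by omega) (by omega) le_rfl (by omega) (by omega)
    · rwa [det2_sub_sub_right]
    · exact hH (i + 1) (p - 1) (by omega) (by omega) (by omega) le_rfl (by omega) (by omega)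
    · rw [det2_rotate]
      have := hH (p - 1) (i + 1) (by omega) le_rfl (by omega) (by omega) (by omega) (by omega)
      rwa [sub_add_cancel, hAp] at this
  have chain : ∀ i : ℤ, 0 ≤ i → i + 1 ≤ p - 3 →
      0 < det2 (A (i + 1 + 1) - A (i + 1)) (A 0 - A (i + 1)) := by
    intro i hi
    induction i, hi using Int.leInduction with
    | base => exact fun h => step 0 le_rfl h (by simp [det2_zero_right])
    | succ i hi ih => exact fun h => step (i + 1) (by omega) h (ih (by omega)).le
  rcases eq_or_lt_of_le hk2 with rfl | hk2
  · exact last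
  · simpa using chain (k - 1) (by omega) (by omega)

lemma det2_pos (hA : IsCPD p A) {k j : ℤ} (h1 : k + 2 ≤ j) (h2 : j ≤ k + p - 1) :
    0 < det2 (A (k + 1) - A k) (A j - A k) := by
  have hp : (0 : ℤ) < p := Int.natCast_pos.2 hA.pos
  have base : ∀ k j : ℤ, 0 ≤ k → k < p → k + 2 ≤ j → j ≤ k + p - 1 →
      0 < det2 (A (k + 1) - A k) (A j - A k) := by
    intro k j hk0 hkp h1 h2
    rcases lt_trichotomy j p with hj | rfl | hj
    · exact hA.2.2 k j hk0 (by omega) (by omega) (by omega) (by omega) (by omega)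
    · rw [show A p = A 0 by simpa using hA.periodic 0]
      exact hA.det2_pos_zero (by omega) (by omega)
    · rw [← hA.periodic.sub_eq j]
      exact hA.2.2 k (j - p) hk0 (by omega) (by omega) (by omega) (by omega) (by omega)
  obtain ⟨n, ⟨hn0, hnp⟩, -⟩ := existsUnique_add_zsmul_mem_Ico hp k 0
  have hn := hA.periodic.zsmul n
  have := base (k + n • p) (j + n • p) hn0 (by linarith) (by linarith) (by linarith)
  rwa [add_right_comm, hn, hn, hn] at this

lemma det2_nonneg (hA : IsCPD p A) (k j : ℤ) : 0 ≤ det2 (A (k + 1) - A k) (A j - A k) := by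
  have hp : (0 : ℤ) < p := Int.natCast_pos.2 hA.pos
  obtain ⟨n, ⟨h1, h2⟩, -⟩ := existsUnique_add_zsmul_mem_Ico hp j k
  rw [← hA.periodic.zsmul n j]
  rcases eq_or_ne (j + n • p) k with h | h
  · rw [h, sub_self, det2_zero_right]
  rcases eq_or_ne (j + n • p) (k + 1) with h' | h'
  · rw [h', det2_self]
  exact (hA.det2_pos (by omega) (by omega)).le

lemma det2_pos_pred (hA : IsCPD p A) (k : ℤ) : 0 < det2 (A (k + 1) - A k) (A (k - 1) - A k) := by
  have := hA.det2_pos (k := k) (j := k - 1 + p) (by have := hA.1; omega) (by omega)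
  rwa [hA.periodic] at this

lemma convexHull_eq (hA : IsCPD p A) :
    convexHull ℝ (range A) = ⋂ k : ℤ, halfPlane (A k) (A (k + 1)) := by
  refine subset_antisymm (convexHull_min (range_subset_iff.2 fun j => mem_iInter.2 fun k =>
    hA.det2_nonneg k j) (convex_iInter fun k => convex_halfPlane _ _)) fun M hM => ?_
  by_contra hMC
  obtain ⟨f, u, hfu, huf⟩ := geometric_hahn_banach_closed_point (convex_convexHull ℝ _)
    hA.isCompact_convexHull.isClosed hMC
  obtain ⟨_, ⟨k, rfl⟩, hk⟩ := exists_max_image (range A) f hA.finite_range (range_nonempty A)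
  -- `M` lies in the angle of the polygon at its `f`-highest vertex `A k`
  obtain ⟨a, b, ha, hb, hab⟩ := exists_nonneg_smul_add_of_det2 (hA.det2_pos_pred k)
    (mem_iInter.1 hM k) (by
      have := mem_iInter.1 hM (k - 1)
      rwa [mem_halfPlane, sub_add_cancel, det2_rotate] at this)
  have hMk : f M ≤ f (A k) := by
    rw [show M = A k + (M - A k) by abel, hab, map_add, map_add, map_smul, map_smul, map_sub,
      map_sub, smul_eq_mul, smul_eq_mul]
    nlinarith [hk _ (mem_range_self (k + 1)), hk _ (mem_range_self (k - 1))]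
  linarith [hfu (A k) (subset_convexHull ℝ _ (mem_range_self k))]

lemma interior_convexHull (hA : IsCPD p A) :
    interior (convexHull ℝ (range A)) = ⋂ k : ℤ, openHalfPlane (A k) (A (k + 1)) := by
  refine subset_antisymm (subset_iInter fun k => interior_subset_openHalfPlane
    (hA.convexHull_eq ▸ iInter_subset _ k) (hA.det2_pos_pred k)) (interior_maximal ?_ ?_)
  · rw [hA.convexHull_eq]
    exact iInter_mono fun k => openHalfPlane_subset_halfPlane _ _
  · rw [← (hA.periodic_edge openHalfPlane).biInter_range_eq hA.pos]
    exact isOpen_biInter_finset fun k _ => isOpen_openHalfPlane _ _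

lemma frontier_convexHull (hA : IsCPD p A) :
    frontier (convexHull ℝ (range A)) = ⋃ k : ℤ, segment ℝ (A k) (A (k + 1)) := by
  rw [hA.isCompact_convexHull.isClosed.frontier_eq, hA.interior_convexHull]
  ext M
  simp only [Set.mem_sdiff, mem_iInter, mem_iUnion, not_forall]
  constructor
  · rintro ⟨hMC, k, hk⟩
    rw [hA.convexHull_eq, mem_iInter] at hMC
    refine ⟨k, mem_segment_of_det2_eq_zero (hA.det2_pos_pred k) ?_
      (le_antisymm (not_lt.1 hk) (hMC k)) ?_ (hMC (k + 1))⟩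
    · simpa using hA.det2_pos_pred (k + 1)
    · simpa using hMC (k - 1)
  · rintro ⟨k, hk⟩
    refine ⟨segment_subset_convexHull (mem_range_self _) (mem_range_self _) hk, k, ?_⟩
    rw [mem_openHalfPlane, det2_eq_zero_of_mem_segment hk]
    exact lt_irrefl 0

lemma centroid_mem_openHalfPlane (hA : IsCPD p A) {k : ℤ} (hk0 : 0 ≤ k) (hkp : k < p) :
    (3 : ℝ)⁻¹ • (A 0 + A 1 + A 2) ∈ openHalfPlane (A k) (A (k + 1)) := by
  have hp := hA.1
  have hpos : 0 < det2 (A (k + 1) - A k) (A 0 - A k) ∨ 0 < det2 (A (k + 1) - A k) (A 1 - A k) ∨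
      0 < det2 (A (k + 1) - A k) (A 2 - A k) := by
    rcases (by omega : k = 0 ∨ k = 1 ∨ 2 ≤ k) with rfl | rfl | hk
    · exact Or.inr (Or.inr (hA.det2_pos (by norm_num) (by omega)))
    · have := hA.det2_pos (k := 1) (j := 0 + p) (by omega) (by omega)
      exact Or.inl (by rwa [hA.periodic] at this)
    · have := hA.det2_pos (k := k) (j := 1 + p) (by omega) (by omega)
      exact Or.inr (Or.inl (by rwa [hA.periodic] at this))
  have h : det2 (A (k + 1) - A k) ((3 : ℝ)⁻¹ • (A 0 + A 1 + A 2) - A k) =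
      (det2 (A (k + 1) - A k) (A 0 - A k) + det2 (A (k + 1) - A k) (A 1 - A k) +
        det2 (A (k + 1) - A k) (A 2 - A k)) / 3 := by
    simp only [det2, Prod.fst_add, Prod.snd_add, Prod.fst_sub, Prod.snd_sub, Prod.smul_fst,
      Prod.smul_snd, smul_eq_mul]
    ring
  rw [mem_openHalfPlane, h]
  have := hA.det2_nonneg k 0
  have := hA.det2_nonneg k 1
  have := hA.det2_nonneg k 2
  rcases hpos with h | h | h <;> positivity

end IsCPD

/-- The polygonal line of a CPD with `p` vertices is the frontier of the convex
hull of its vertices, a bounded convex set with nonempty interior which is the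
intersection of the `p` closed half-planes determined by its oriented edges. -/
theorem CPD_polyline_is_boundary (p : ℕ) (A : ℤ → ℝ × ℝ) (hA : IsCPD p A)
    (C : Set (ℝ × ℝ))
    (hC : C = convexHull ℝ (A '' {k : ℤ | 0 ≤ k ∧ k < (p : ℤ)})) :
    Bornology.IsBounded C ∧ Convex ℝ C ∧ (interior C).Nonempty ∧
    frontier C = Polyline p A ∧
    C = ⋂ k ∈ Finset.range p,
      {M : ℝ × ℝ | 0 ≤ det2 (A (k + 1) - A k) (M - A k)} := by
  have hp := hA.pos
  rw [show {k : ℤ | 0 ≤ k ∧ k < (p : ℤ)} = Ico 0 (p : ℤ) from rfl, hA.image_Ico] at hC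
  subst hC
  refine ⟨hA.isCompact_convexHull.isBounded, convex_convexHull ℝ _, ?_, ?_, ?_⟩
  · rw [hA.interior_convexHull, ← (hA.periodic_edge openHalfPlane).biInter_range_eq hp]
    exact ⟨_, mem_iInter₂.2 fun k hk =>
      hA.centroid_mem_openHalfPlane (Int.natCast_nonneg k) (by simpa using hk)⟩
  · rw [hA.frontier_convexHull, Polyline]
    exact ((hA.periodic_edge (segment ℝ)).biUnion_range_eq hp).symm
  · rw [hA.convexHull_eq]
    exact ((hA.periodic_edge halfPlane).biInter_range_eq hp).symm
end
end
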